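/- arXiv:1612.09193 — 5 statements merged into one kernel-verified Lean document; each statement's English description precedes it below -/
import Mathlib

section
/- If an abstract rewriting system equipped with a labelling of its steps in a well-founded order is decreasing (every local branching (f, g) from a common source can be completed by a confluence whose first legs use only labels strictly below the label of f, respectively g, followed by at most one step with the same label, followed by steps with labels strictly below one of the two), then the system is confluent. -/
/-- Reduction using only steps whose label lies in the set `S`. -/
def UnionRel {α W : Type*} (rel : W → α → α → Prop) (S : Set W) (a b : α) : Prop :=
  ∃ k ∈ S, rel k a b

/-- Van Oostrom's decreasing-diagram condition for a labelled abstract rewriting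
system: every local branching `a → b` (label `k`), `a → c` (label `l`) can be
completed as `b →*_{≺k} b₁ →^=_{l} b₂ →*_{≺k ∨ ≺l} d` and
`c →*_{≺l} c₁ →^=_{k} c₂ →*_{≺k ∨ ≺l} d`. -/
def Decreasing {α W : Type*} (rel : W → α → α → Prop) (prec : W → W → Prop) : Prop :=
  ∀ k l a b c, rel k a b → rel l a c →
    ∃ b₁ b₂ c₁ c₂ d,
      Relation.ReflTransGen (UnionRel rel {j | prec j k}) b b₁ ∧
      (b₂ = b₁ ∨ rel l b₁ b₂) ∧
      Relation.ReflTransGen (UnionRel rel {j | prec j k ∨ prec j l}) b₂ d ∧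
      Relation.ReflTransGen (UnionRel rel {j | prec j l}) c c₁ ∧
      (c₂ = c₁ ∨ rel k c₁ c₂) ∧
      Relation.ReflTransGen (UnionRel rel {j | prec j k ∨ prec j l}) c₂ d

/-!
Van Oostrom's proof by the lexicographic maximum measure. The measure `lexMax σ` of a reduction
with label sequence `σ` is the multiset of those labels of `σ` that are not below an earlier
label, and `lexMax (σ ++ τ) = lexMax σ + lexMaxAfter σ τ`. By well-founded induction on
`lexMax σ + lexMax τ` in the Dershowitz–Manna order, every peak `(σ, τ)` has a valley `(σ', τ')`
with `lexMaxAfter σ σ' ≤ lexMaxAfter σ τ` (informally `|σσ'| ≤ |στ|`) and symmetrically. For a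
peak `(k :: σ₁, l :: τ₁)` the elementary diagram of `(k, l)`, with legs `δ` and `γ`, leaves three
smaller peaks: `(σ₁, δ)`, `(τ₁, γ)`, and the peak `(δ', γ')` formed by the valleys of the first
two. The invariant is exactly what makes the third peak smaller, and it survives pasting the four
diagrams together. A well-founded labelling extends to a well-order, and enlarging the order
keeps the system decreasing.
-/

namespace Multiset

variable {α : Type*} [Preorder α] {M N M' N' P : Multiset α} {a : α}

def IsDershowitzMannaLE (M N : Multiset α) : Prop :=
  ∃ X Y Z, M = X + Y ∧ N = X + Z ∧ ∀ y ∈ Y, ∃ z ∈ Z, y < z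

theorem isDershowitzMannaLE_iff :
    IsDershowitzMannaLE M N ↔ M = N ∨ IsDershowitzMannaLT M N := by
  constructor
  · rintro ⟨X, Y, Z, rfl, rfl, hYZ⟩
    by_cases hZ : Z = 0
    · subst hZ
      have hY : Y = 0 := eq_zero_of_forall_notMem fun y hy => by simpa using hYZ y hy
      simp [hY]
    · exact .inr ⟨X, Y, Z, hZ, rfl, rfl, hYZ⟩
  · rintro (rfl | ⟨X, Y, Z, -, rfl, rfl, hYZ⟩)
    · exact ⟨M, 0, 0, by simp, by simp, by simp⟩
    · exact ⟨X, Y, Z, rfl, rfl, hYZ⟩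

theorem IsDershowitzMannaLT.isDershowitzMannaLE (h : IsDershowitzMannaLT M N) :
    IsDershowitzMannaLE M N :=
  isDershowitzMannaLE_iff.2 (.inr h)

namespace IsDershowitzMannaLE

theorem refl (M : Multiset α) : IsDershowitzMannaLE M M :=
  isDershowitzMannaLE_iff.2 (.inl rfl)

theorem of_le (h : M ≤ N) : IsDershowitzMannaLE M N := by
  obtain ⟨D, rfl⟩ := le_iff_exists_add.1 h
  exact ⟨M, 0, D, by simp, rfl, by simp⟩

theorem trans_lt (h₁ : IsDershowitzMannaLE M N) (h₂ : IsDershowitzMannaLT N P) :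
    IsDershowitzMannaLT M P := by
  rcases isDershowitzMannaLE_iff.1 h₁ with rfl | h₁
  exacts [h₂, h₁.trans h₂]

theorem trans (h₁ : IsDershowitzMannaLE M N) (h₂ : IsDershowitzMannaLE N P) :
    IsDershowitzMannaLE M P := by
  rcases isDershowitzMannaLE_iff.1 h₂ with rfl | h₂
  exacts [h₁, (h₁.trans_lt h₂).isDershowitzMannaLE]

theorem add (h : IsDershowitzMannaLE M N) (h' : IsDershowitzMannaLE M' N') :
    IsDershowitzMannaLE (M + M') (N + N') := by
  obtain ⟨X, Y, Z, rfl, rfl, hYZ⟩ := h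
  obtain ⟨X', Y', Z', rfl, rfl, hYZ'⟩ := h'
  refine ⟨X + X', Y + Y', Z + Z', add_add_add_comm .., add_add_add_comm .., ?_⟩
  simp only [mem_add]
  rintro y (hy | hy)
  · obtain ⟨z, hz, hyz⟩ := hYZ y hy
    exact ⟨z, .inl hz, hyz⟩
  · obtain ⟨z, hz, hyz⟩ := hYZ' y hy
    exact ⟨z, .inr hz, hyz⟩

theorem filter {p : α → Prop} [DecidablePred p] (hp : IsUpperSet {x | p x})
    (h : IsDershowitzMannaLE M N) : IsDershowitzMannaLE (M.filter p) (N.filter p) := by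
  obtain ⟨X, Y, Z, rfl, rfl, hYZ⟩ := h
  refine ⟨X.filter p, Y.filter p, Z.filter p, filter_add .., filter_add .., ?_⟩
  intro y hy
  rw [mem_filter] at hy
  obtain ⟨z, hz, hyz⟩ := hYZ y hy.1
  exact ⟨z, mem_filter.2 ⟨hz, hp hyz.le hy.2⟩, hyz⟩

theorem exists_ge_of_mem (h : IsDershowitzMannaLE M N) (ha : a ∈ M) : ∃ b ∈ N, a ≤ b := by
  obtain ⟨X, Y, Z, rfl, rfl, hYZ⟩ := h
  rcases mem_add.1 ha with ha | ha
  · exact ⟨a, mem_add.2 (.inl ha), le_rfl⟩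
  · obtain ⟨z, hz, haz⟩ := hYZ a ha
    exact ⟨z, mem_add.2 (.inr hz), haz.le⟩

end IsDershowitzMannaLE

theorem IsDershowitzMannaLT.add_le (h : IsDershowitzMannaLT M N)
    (h' : IsDershowitzMannaLE M' N') : IsDershowitzMannaLT (M + M') (N + N') := by
  obtain ⟨X, Y, Z, hZ, rfl, rfl, hYZ⟩ := h
  refine IsDershowitzMannaLE.trans_lt ?_ (⟨X + N', Y, Z, hZ, rfl, add_right_comm .., hYZ⟩ :
    IsDershowitzMannaLT (X + N' + Y) _)
  rw [add_right_comm]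
  exact ((IsDershowitzMannaLE.refl X).add h').add (.refl Y)

theorem isDershowitzMannaLE_singleton_iff :
    IsDershowitzMannaLE M {a} ↔ M = {a} ∨ ∀ b ∈ M, b < a := by
  constructor
  · rintro ⟨X, Y, Z, rfl, hXZ, hYZ⟩
    rcases le_singleton.1 (hXZ ▸ le_add_right X Z) with rfl | rfl
    · right
      rw [zero_add] at hXZ ⊢
      simpa [← hXZ] using hYZ
    · obtain rfl : Z = 0 := by simpa using hXZ
      have hY : Y = 0 := eq_zero_of_forall_notMem fun y hy => by simpa using hYZ y hy
      simp [hY]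
  · rintro (rfl | h)
    · exact .refl _
    · exact ⟨0, M, {a}, by simp, by simp, fun b hb => ⟨a, mem_singleton_self a, h b hb⟩⟩

theorem IsDershowitzMannaLE.le_add_filter_not {p : α → Prop} [DecidablePred p]
    (h : IsDershowitzMannaLE (M.filter p) (N.filter p)) :
    IsDershowitzMannaLE M (N + M.filter (¬ p ·)) := by
  conv_lhs => rw [← filter_add_not p M]
  exact (h.add (.refl _)).trans (.of_le (add_le_add_left (filter_le p N) _))

theorem IsDershowitzMannaLE.le_filter {p : α → Prop} [DecidablePred p]
    (hp : IsUpperSet {x | p x}) (h : IsDershowitzMannaLE M N) (hM : ∀ b ∈ M, p b) :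
    IsDershowitzMannaLE M (N.filter p) :=
  filter_eq_self.2 hM ▸ h.filter hp

end Multiset

open Relation

theorem UnionRel.mono {α W : Type*} {rel : W → α → α → Prop} {S T : Set W} (h : S ⊆ T) :
    UnionRel rel S ≤ UnionRel rel T :=
  fun _ _ ⟨j, hj, hr⟩ => ⟨j, h hj, hr⟩

theorem Decreasing.mono {α W : Type*} {rel : W → α → α → Prop} {p q : W → W → Prop} (hpq : p ≤ q)
    (h : Decreasing rel p) : Decreasing rel q := by
  intro k l a b c hk hl
  obtain ⟨b₁, b₂, c₁, c₂, d, h₁, h₂, h₃, h₄, h₅, h₆⟩ := h k l a b c hk hl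
  have hkl : {j | p j k ∨ p j l} ⊆ {j | q j k ∨ q j l} := fun j => Or.imp (hpq j k) (hpq j l)
  exact ⟨b₁, b₂, c₁, c₂, d, ReflTransGen.mono (UnionRel.mono fun j => hpq j k) _ _ h₁, h₂,
    ReflTransGen.mono (UnionRel.mono hkl) _ _ h₃,
    ReflTransGen.mono (UnionRel.mono fun j => hpq j l) _ _ h₄, h₅,
    ReflTransGen.mono (UnionRel.mono hkl) _ _ h₆⟩

namespace DecreasingDiagram

open Multiset

section LabelledPath

variable {α W : Type*} {rel : W → α → α → Prop} {a b c : α} {σ τ : List W}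

inductive LabelledPath (rel : W → α → α → Prop) : α → List W → α → Prop
  | nil (a : α) : LabelledPath rel a [] a
  | cons {a b c : α} {k : W} {σ : List W} :
      rel k a b → LabelledPath rel b σ c → LabelledPath rel a (k :: σ) c

theorem LabelledPath.append (h₁ : LabelledPath rel a σ b) (h₂ : LabelledPath rel b τ c) :
    LabelledPath rel a (σ ++ τ) c := by
  induction h₁ with
  | nil => exact h₂
  | cons h _ ih => exact .cons h (ih h₂)

theorem reflTransGen_unionRel_iff {S : Set W} :
    ReflTransGen (UnionRel rel S) a b ↔ ∃ σ, LabelledPath rel a σ b ∧ ∀ j ∈ σ, j ∈ S := by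
  constructor
  · intro h
    induction h using ReflTransGen.head_induction_on with
    | refl => exact ⟨[], .nil _, by simp⟩
    | head hstep _ ih =>
      obtain ⟨k, hk, hstep⟩ := hstep
      obtain ⟨σ, hσ, hσS⟩ := ih
      exact ⟨k :: σ, .cons hstep hσ, by simpa [hk] using hσS⟩
  · rintro ⟨σ, hσ, hσS⟩
    induction hσ with
    | nil => exact .refl
    | cons hstep _ ih =>
      simp only [List.mem_cons, forall_eq_or_imp] at hσS
      exact .head ⟨_, hσS.1, hstep⟩ (ih hσS.2)

theorem reflTransGen_iff_exists_labelledPath :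
    ReflTransGen (fun x y => ∃ k, rel k x y) a b ↔ ∃ σ, LabelledPath rel a σ b := by
  have : (fun x y => ∃ k, rel k x y) = UnionRel rel Set.univ := by
    ext; simp [UnionRel]
  simp [this, reflTransGen_unionRel_iff]

end LabelledPath

section Order

variable {W : Type*} [Preorder W] {k l j x : W} {σ δ : List W}

def NotBelow (σ : List W) (j : W) : Prop := ∀ x ∈ σ, ¬ j < x

theorem isUpperSet_notBelow (σ : List W) : IsUpperSet {j | NotBelow σ j} :=
  fun _ _ hab ha x hx hbx => ha x hx (hab.trans_lt hbx)

theorem isUpperSet_not_lt (k : W) : IsUpperSet {j | ¬ j < k} :=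
  fun _ _ hab ha hbk => ha (hab.trans_lt hbk)

theorem notBelow_cons : NotBelow (k :: σ) j ↔ ¬ j < k ∧ NotBelow σ j :=
  List.forall_mem_cons

theorem not_notBelow : ¬ NotBelow σ j ↔ ∃ x ∈ σ, j < x := by
  simp [NotBelow]

def DecreasingLeg (k l : W) (δ : List W) : Prop :=
  ∃ δ₁ δ₂ δ₃, δ = δ₁ ++ (δ₂ ++ δ₃) ∧ (∀ j ∈ δ₁, j < k) ∧ (δ₂ = [] ∨ δ₂ = [l]) ∧
    ∀ j ∈ δ₃, j < k ∨ j < l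

theorem DecreasingLeg.lt_or_le (h : DecreasingLeg k l δ) (hx : x ∈ δ) : x < k ∨ x ≤ l := by
  obtain ⟨δ₁, δ₂, δ₃, rfl, h₁, h₂ | h₂, h₃⟩ := h <;> subst h₂ <;>
    simp only [List.mem_append, List.mem_singleton, List.not_mem_nil, false_or] at hx
  · rcases hx with hx | hx
    · exact .inl (h₁ x hx)
    · exact (h₃ x hx).imp_right le_of_lt
  · rcases hx with hx | rfl | hx
    · exact .inl (h₁ x hx)
    · exact .inr le_rfl
    · exact (h₃ x hx).imp_right le_of_lt

theorem DecreasingLeg.lt_or_lt (h : DecreasingLeg k l δ) (hj : ¬ NotBelow δ j) :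
    j < k ∨ j < l := by
  obtain ⟨x, hx, hjx⟩ := not_notBelow.1 hj
  exact (h.lt_or_le hx).imp hjx.trans hjx.trans_le

variable {α : Type*} {rel : W → α → α → Prop} {a b c d : α}

theorem exists_decreasingLeg {b₁ b₂ : α}
    (h₁ : ReflTransGen (UnionRel rel {j | j < k}) b b₁) (h₂ : b₂ = b₁ ∨ rel l b₁ b₂)
    (h₃ : ReflTransGen (UnionRel rel {j | j < k ∨ j < l}) b₂ d) :
    ∃ δ, LabelledPath rel b δ d ∧ DecreasingLeg k l δ := by
  obtain ⟨δ₁, hδ₁, hδ₁k⟩ := reflTransGen_unionRel_iff.1 h₁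
  obtain ⟨δ₃, hδ₃, hδ₃kl⟩ := reflTransGen_unionRel_iff.1 h₃
  obtain ⟨δ₂, hδ₂, hδ₂l⟩ : ∃ δ₂, LabelledPath rel b₁ δ₂ b₂ ∧ (δ₂ = [] ∨ δ₂ = [l]) := by
    rcases h₂ with rfl | h₂
    exacts [⟨[], .nil _, .inl rfl⟩, ⟨[l], .cons h₂ (.nil _), .inr rfl⟩]
  exact ⟨δ₁ ++ (δ₂ ++ δ₃), hδ₁.append (hδ₂.append hδ₃), δ₁, δ₂, δ₃, rfl, hδ₁k, hδ₂l, hδ₃kl⟩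

theorem _root_.Decreasing.exists_decreasingLegs (h : Decreasing rel (· < ·))
    (hk : rel k a b) (hl : rel l a c) :
    ∃ d δ γ, LabelledPath rel b δ d ∧ LabelledPath rel c γ d ∧
      DecreasingLeg k l δ ∧ DecreasingLeg l k γ := by
  obtain ⟨b₁, b₂, c₁, c₂, d, h₁, h₂, h₃, h₄, h₅, h₆⟩ := h k l a b c hk hl
  obtain ⟨δ, hδ, hδkl⟩ := exists_decreasingLeg h₁ h₂ h₃
  obtain ⟨γ, hγ, hγlk⟩ :=
    exists_decreasingLeg h₄ h₅ (ReflTransGen.mono (UnionRel.mono fun _ => Or.symm) _ _ h₆)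
  exact ⟨d, δ, γ, hδ, hγ, hδkl, hγlk⟩

end Order

variable {W : Type*} [Preorder W] [DecidableLT W] {k l j : W} {σ τ δ : List W}

instance (σ : List W) : DecidablePred (NotBelow σ) :=
  fun _ => inferInstanceAs (Decidable (∀ x ∈ σ, _))

def lexMax : List W → Multiset W
  | [] => 0
  | k :: σ => k ::ₘ (lexMax σ).filter (¬ · < k)

def lexMaxAfter (σ τ : List W) : Multiset W :=
  (lexMax τ).filter (NotBelow σ)

@[simp] theorem lexMax_nil : lexMax ([] : List W) = 0 := rfl

@[simp] theorem lexMax_cons : lexMax (k :: σ) = k ::ₘ (lexMax σ).filter (¬ · < k) := rfl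

theorem lexMaxAfter_nil : lexMaxAfter [] τ = lexMax τ :=
  filter_eq_self.2 fun _ _ _ => by simp

theorem lexMaxAfter_cons : lexMaxAfter (k :: σ) τ = (lexMaxAfter σ τ).filter (¬ · < k) := by
  simp only [lexMaxAfter, filter_filter]
  exact filter_congr fun _ _ => notBelow_cons

theorem lexMax_append : lexMax (σ ++ τ) = lexMax σ + lexMaxAfter σ τ := by
  induction σ with
  | nil => simp [lexMaxAfter_nil]
  | cons k σ ih => simp [ih, filter_add, lexMaxAfter_cons]

theorem lexMaxAfter_append (π : List W) :
    lexMaxAfter π (σ ++ τ) = lexMaxAfter π σ + (lexMaxAfter σ τ).filter (NotBelow π) := by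
  rw [lexMaxAfter, lexMax_append, filter_add]
  rfl

theorem lexMax_le_coe (σ : List W) : lexMax σ ≤ σ := by
  induction σ with
  | nil => simp
  | cons k σ ih => exact cons_le_cons k ((filter_le _ _).trans ih)

theorem mem_of_mem_lexMax (h : j ∈ lexMax σ) : j ∈ σ :=
  mem_coe.1 (mem_of_le (lexMax_le_coe σ) h)

theorem exists_mem_lexMax_ge (h : j ∈ σ) : ∃ x ∈ lexMax σ, j ≤ x := by
  induction σ with
  | nil => simp at h
  | cons k σ ih =>
    rcases List.mem_cons.1 h with rfl | h
    · exact ⟨j, mem_cons_self _ _, le_rfl⟩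
    obtain ⟨x, hx, hjx⟩ := ih h
    by_cases hxk : x < k
    · exact ⟨k, mem_cons_self _ _, (hjx.trans_lt hxk).le⟩
    · exact ⟨x, mem_cons_of_mem (mem_filter.2 ⟨hx, hxk⟩), hjx⟩

theorem lexMax_add_lt_lexMax_cons {Y : Multiset W} (hY : ∀ y ∈ Y, y < k) :
    IsDershowitzMannaLT (lexMax σ + Y) (lexMax (k :: σ)) := by
  refine ⟨(lexMax σ).filter (¬ · < k), (lexMax σ).filter (· < k) + Y, {k}, by simp, ?_, ?_, ?_⟩
  · rw [← add_assoc, add_comm (filter _ _), filter_add_not]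
  · rw [lexMax_cons, add_comm, singleton_add]
  · simp only [mem_add, mem_filter, mem_singleton, exists_eq_left]
    rintro y (hy | hy)
    exacts [hy.2, hY y hy]

theorem DecreasingLeg.filter_lexMax_le (h : DecreasingLeg k l δ) :
    IsDershowitzMannaLE ((lexMax δ).filter (¬ · < k)) {l} := by
  obtain ⟨δ₁, δ₂, δ₃, rfl, h₁, h₂, h₃⟩ := h
  have hδ₁ : (lexMax δ₁).filter (¬ · < k) = 0 :=
    filter_eq_nil.2 fun j hj hjk => hjk (h₁ j (mem_of_mem_lexMax hj))
  have hle : (lexMax (δ₁ ++ (δ₂ ++ δ₃))).filter (¬ · < k) ≤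
      (lexMax (δ₂ ++ δ₃)).filter (¬ · < k) := by
    rw [lexMax_append, filter_add, hδ₁, zero_add, lexMaxAfter, filter_comm]
    exact filter_le _ _
  refine (IsDershowitzMannaLE.of_le hle).trans ?_
  rcases h₂ with rfl | rfl
  · refine isDershowitzMannaLE_singleton_iff.2 (.inr fun j hj => ?_)
    rw [mem_filter] at hj
    exact (h₃ j (mem_of_mem_lexMax hj.1)).resolve_left hj.2
  · refine .of_le ?_
    have hδ₃ : ((lexMax δ₃).filter (¬ · < l)).filter (¬ · < k) = 0 :=
      filter_eq_nil.2 fun j hj hjk =>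
        (h₃ j (mem_of_mem_lexMax (mem_of_mem_filter hj))).elim hjk (of_mem_filter hj)
    rw [List.singleton_append, lexMax_cons, filter_cons, hδ₃, add_zero]
    split_ifs <;> simp

theorem DecreasingLeg.lexMax_add_lt (hδ : DecreasingLeg k l δ) (σ τ : List W) :
    IsDershowitzMannaLT (lexMax σ + lexMax δ) (lexMax (k :: σ) + lexMax (l :: τ)) := by
  have hsplit := filter_add_not (· < k) (lexMax δ)
  rw [← hsplit, ← add_assoc]
  refine (lexMax_add_lt_lexMax_cons fun _ hy => (mem_filter.1 hy).2).add_le ?_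
  exact hδ.filter_lexMax_le.trans (.of_le (singleton_le.2 (mem_cons_self _ _)))

theorem exists_ge_of_lexMaxAfter_le {δ' : List W} {x : W}
    (h : IsDershowitzMannaLE (lexMaxAfter δ δ') (lexMaxAfter δ σ)) (hx : x ∈ δ') :
    ∃ y ∈ δ ++ σ, x ≤ y := by
  obtain ⟨z, hz, hxz⟩ := exists_mem_lexMax_ge hx
  by_cases hzδ : NotBelow δ z
  · obtain ⟨y, hy, hzy⟩ := h.exists_ge_of_mem (mem_filter.2 ⟨hz, hzδ⟩)
    exact ⟨y, List.mem_append_right _ (mem_of_mem_lexMax (mem_of_mem_filter hy)),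
      hxz.trans hzy⟩
  · obtain ⟨y, hy, hzy⟩ := not_notBelow.1 hzδ
    exact ⟨y, List.mem_append_left _ hy, hxz.trans hzy.le⟩

theorem lexMax_add_lexMax_lt_of_legs {γ δ' γ' : List W} (hδ : DecreasingLeg k l δ)
    (hγ : DecreasingLeg l k γ)
    (hδ' : IsDershowitzMannaLE (lexMaxAfter δ δ') (lexMaxAfter δ σ))
    (hγ' : IsDershowitzMannaLE (lexMaxAfter γ γ') (lexMaxAfter γ τ)) :
    IsDershowitzMannaLT (lexMax δ' + lexMax γ') (lexMax (k :: σ) + lexMax (l :: τ)) := by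
  set E := (lexMax δ').filter (¬ NotBelow δ ·) + (lexMax γ').filter (¬ NotBelow γ ·)
  have hE : ∀ j ∈ E, j < k ∨ j < l := by
    intro j hj
    rcases mem_add.1 hj with hj | hj
    · exact hδ.lt_or_lt (mem_filter.1 hj).2
    · exact (hγ.lt_or_lt (mem_filter.1 hj).2).symm
  have hle : IsDershowitzMannaLE (lexMax δ' + lexMax γ')
      ((lexMax σ + E.filter (· < k)) + (lexMax τ + E.filter (¬ · < k))) := by
    have hsplit : (lexMax σ + E.filter (· < k)) + (lexMax τ + E.filter (¬ · < k)) =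
        (lexMax σ + lexMax τ) + E := by
      rw [add_add_add_comm, filter_add_not]
    refine (hδ'.le_add_filter_not.add hγ'.le_add_filter_not).trans (.of_le (le_of_eq ?_))
    rw [hsplit, add_add_add_comm]
  refine hle.trans_lt ((lexMax_add_lt_lexMax_cons fun j hj => (mem_filter.1 hj).2).add_le
    (lexMax_add_lt_lexMax_cons fun j hj => ?_).isDershowitzMannaLE)
  rw [mem_filter] at hj
  exact (hE j hj.1).resolve_left hj.2

theorem exists_filter_lexMaxAfter_le {γ σ' δ' γ' ρ : List W} (hγ : DecreasingLeg l k γ)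
    (hδ' : ∀ x ∈ δ', x ≤ l ∨ ∃ y ∈ k :: σ, x ≤ y)
    (hγ' : IsDershowitzMannaLE (lexMaxAfter γ γ') (lexMaxAfter γ τ))
    (hρ : IsDershowitzMannaLE (lexMaxAfter δ' ρ) (lexMaxAfter δ' γ')) :
    ∃ J : Multiset W, (∀ j ∈ J, j < l ∧ NotBelow (k :: σ) j ∧ NotBelow σ' j) ∧
      IsDershowitzMannaLE ((lexMaxAfter σ' ρ).filter (NotBelow (k :: σ)))
        ((lexMaxAfter [l] τ).filter (NotBelow (k :: σ)) + J) := by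
  set p := NotBelow (k :: σ)
  have hlt : ∀ j x, p j → j < x → (x ≤ l ∨ ∃ y ∈ k :: σ, x ≤ y) → j < l := by
    rintro j x hj hjx (hxl | ⟨y, hy, hxy⟩)
    exacts [hjx.trans_le hxl, absurd (hjx.trans_le hxy) (hj y hy)]
  set E := (lexMax ρ).filter (¬ NotBelow δ' ·) + (lexMax γ').filter (¬ NotBelow γ ·)
  have hE : ∀ j ∈ E, p j → j < l := by
    intro j hj hpj
    rcases mem_add.1 hj with hj | hj <;> obtain ⟨x, hx, hjx⟩ := not_notBelow.1 (mem_filter.1 hj).2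
    · exact hlt j x hpj hjx (hδ' x hx)
    · exact hlt j x hpj hjx ((hγ.lt_or_le hx).imp le_of_lt fun h => ⟨k, List.mem_cons_self, h⟩)
  have hρτ : IsDershowitzMannaLE (lexMax ρ) (lexMax τ + E) := by
    refine (hρ.le_add_filter_not.trans (hγ'.le_add_filter_not.add (.refl _))).trans
      (.of_le (le_of_eq ?_))
    rw [add_assoc, add_comm (filter _ (lexMax γ'))]
  set q := fun j => p j ∧ NotBelow σ' j
  have hq : IsUpperSet {j | q j} := (isUpperSet_notBelow _).inter (isUpperSet_notBelow _)
  refine ⟨((lexMax τ).filter q).filter (· < l) + E.filter q, ?_, ?_⟩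
  · intro j hj
    rcases mem_add.1 hj with hj | hj
    · simp only [mem_filter] at hj
      exact ⟨hj.2, hj.1.2⟩
    · rw [mem_filter] at hj
      exact ⟨hE j hj.1 hj.2.1, hj.2⟩
  have hτ : ((lexMax τ).filter q).filter (¬ · < l) ≤ (lexMaxAfter [l] τ).filter p := by
    simp only [lexMaxAfter, filter_filter]
    exact monotone_filter_right _ fun j hj => ⟨hj.2.1, by simpa [NotBelow] using hj.1⟩
  rw [lexMaxAfter, filter_filter]
  refine (hρτ.filter hq).trans (.of_le ?_)
  rw [filter_add]
  calc ((lexMax τ).filter q + E.filter q)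
      = ((lexMax τ).filter q).filter (¬ · < l) +
          (((lexMax τ).filter q).filter (· < l) + E.filter q) := by
        rw [← add_assoc, add_comm (filter (¬ · < l) _), filter_add_not]
    _ ≤ _ := add_le_add hτ le_rfl

theorem lexMaxAfter_append_le {γ σ' δ' γ' ρ : List W} (hδ : DecreasingLeg k l δ)
    (hγ : DecreasingLeg l k γ)
    (hσ' : IsDershowitzMannaLE (lexMaxAfter σ σ') (lexMaxAfter σ δ))
    (hδ' : IsDershowitzMannaLE (lexMaxAfter δ δ') (lexMaxAfter δ σ))
    (hγ' : IsDershowitzMannaLE (lexMaxAfter γ γ') (lexMaxAfter γ τ))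
    (hρ : IsDershowitzMannaLE (lexMaxAfter δ' ρ) (lexMaxAfter δ' γ')) :
    IsDershowitzMannaLE (lexMaxAfter (k :: σ) (σ' ++ ρ)) (lexMaxAfter (k :: σ) (l :: τ)) := by
  have hδ'le : ∀ x ∈ δ', x ≤ l ∨ ∃ y ∈ k :: σ, x ≤ y := by
    intro x hx
    obtain ⟨y, hy, hxy⟩ := exists_ge_of_lexMaxAfter_le hδ' hx
    rcases List.mem_append.1 hy with hy | hy
    · exact (hδ.lt_or_le hy).symm.imp hxy.trans fun hyk => ⟨k, List.mem_cons_self, hxy.trans hyk.le⟩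
    · exact .inr ⟨y, List.mem_cons_of_mem _ hy, hxy⟩
  obtain ⟨J, hJ, hB⟩ := exists_filter_lexMaxAfter_le (σ' := σ') hγ hδ'le hγ' hρ
  have hA : IsDershowitzMannaLE (lexMaxAfter (k :: σ) σ') {l} := by
    rw [lexMaxAfter_cons]
    refine (hσ'.filter (isUpperSet_not_lt k)).trans (.trans (.of_le ?_) hδ.filter_lexMax_le)
    rw [lexMaxAfter, filter_comm]
    exact filter_le _ _
  set A := lexMaxAfter (k :: σ) σ'
  -- A copy of `l` in `A` lies on `σ'`, and the labels of `J` are below `l` but not below `σ'`.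
  have hAJ : IsDershowitzMannaLE (A + J) {l} := by
    rcases isDershowitzMannaLE_singleton_iff.1 hA with hA | hA
    · have hlσ' : l ∈ σ' := mem_of_mem_lexMax (mem_of_mem_filter (hA ▸ mem_singleton_self l))
      have hJ0 : J = 0 := eq_zero_of_forall_notMem fun j hj => (hJ j hj).2.2 l hlσ' (hJ j hj).1
      rw [hA, hJ0, add_zero]
      exact .refl _
    · refine isDershowitzMannaLE_singleton_iff.2 (.inr fun j hj => ?_)
      exact (mem_add.1 hj).elim (hA j) fun hj => (hJ j hj).1
  have hAJp : ∀ j ∈ A + J, NotBelow (k :: σ) j := by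
    intro j hj
    exact (mem_add.1 hj).elim (fun hj => (mem_filter.1 hj).2) fun hj => (hJ j hj).2.1
  rw [lexMaxAfter_append, show l :: τ = [l] ++ τ from rfl, lexMaxAfter_append]
  refine ((IsDershowitzMannaLE.refl A).add hB).trans ?_
  rw [add_comm _ J, ← add_assoc]
  exact (hAJ.le_filter (isUpperSet_notBelow _) hAJp).add (.refl _)

theorem _root_.Decreasing.exists_join [WellFoundedLT W] {α : Type*} {rel : W → α → α → Prop}
    {a b c : α} (hdec : Decreasing rel (· < ·))
    (hσ : LabelledPath rel a σ b) (hτ : LabelledPath rel a τ c) :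
    ∃ d σ' τ', LabelledPath rel b σ' d ∧ LabelledPath rel c τ' d ∧
      IsDershowitzMannaLE (lexMaxAfter σ σ') (lexMaxAfter σ τ) ∧
      IsDershowitzMannaLE (lexMaxAfter τ τ') (lexMaxAfter τ σ) := by
  obtain ⟨m, hm⟩ : ∃ m, lexMax σ + lexMax τ = m := ⟨_, rfl⟩
  induction m using (wellFounded_isDershowitzMannaLT (α := W)).induction
    generalizing a b c σ τ with
  | _ m ih =>
  subst hm
  cases hσ with
  | nil => exact ⟨c, τ, [], hτ, .nil c, .refl _, .refl _⟩
  | @cons _ b₀ _ k σ₁ hk hσ₁ =>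
  cases hτ with
  | nil => exact ⟨b, [], k :: σ₁, .nil b, .cons hk hσ₁, .refl _, .refl _⟩
  | @cons _ c₀ _ l τ₁ hl hτ₁ =>
  obtain ⟨e, δ, γ, hδ, hγ, hδkl, hγlk⟩ := hdec.exists_decreasingLegs hk hl
  obtain ⟨f, σ', δ', hσ', hδ', hσ'δ, hδ'σ⟩ := ih _ (hδkl.lexMax_add_lt σ₁ τ₁) hσ₁ hδ rfl
  obtain ⟨g, τ', γ', hτ', hγ', hτ'γ, hγ'τ⟩ :=
    ih _ (add_comm (lexMax (k :: σ₁)) _ ▸ hγlk.lexMax_add_lt τ₁ σ₁) hτ₁ hγ rfl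
  obtain ⟨h, ρ, π, hρ, hπ, hρπ, hπρ⟩ :=
    ih _ (lexMax_add_lexMax_lt_of_legs hδkl hγlk hδ'σ hγ'τ) hδ' hγ' rfl
  exact ⟨h, σ' ++ ρ, τ' ++ π, hσ'.append hρ, hτ'.append hπ,
    lexMaxAfter_append_le hδkl hγlk hσ'δ hδ'σ hγ'τ hρπ,
    lexMaxAfter_append_le hγlk hδkl hτ'γ hγ'τ hδ'σ hπρ⟩

end DecreasingDiagram

open DecreasingDiagram in
/-- Decreasing diagrams (van Oostrom): an abstract rewriting system whose steps
are labelled in a well-founded order and which is decreasing is confluent. -/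
theorem decreasing_confluent {α W : Type*} (rel : W → α → α → Prop)
    (prec : W → W → Prop) (hwf : WellFounded prec)
    (hdec : Decreasing rel prec) :
    ∀ a b c, Relation.ReflTransGen (fun x y => ∃ k, rel k x y) a b →
      Relation.ReflTransGen (fun x y => ∃ k, rel k x y) a c →
      ∃ d, Relation.ReflTransGen (fun x y => ∃ k, rel k x y) b d ∧
        Relation.ReflTransGen (fun x y => ∃ k, rel k x y) c d := by
  have : IsWellFounded W prec := ⟨hwf⟩
  obtain ⟨r, hpr, hr⟩ := IsWellFounded.exists_well_order_ge prec
  let := IsWellOrder.linearOrder r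
  have : WellFoundedLT W := ⟨hr.wf⟩
  intro a b c hab hac
  obtain ⟨σ, hσ⟩ := reflTransGen_iff_exists_labelledPath.1 hab
  obtain ⟨τ, hτ⟩ := reflTransGen_iff_exists_labelledPath.1 hac
  obtain ⟨d, σ', τ', hbd, hcd, -⟩ := (hdec.mono hpr).exists_join hσ hτ
  exact ⟨d, reflTransGen_iff_exists_labelledPath.2 ⟨σ', hbd⟩,
    reflTransGen_iff_exists_labelledPath.2 ⟨τ', hcd⟩⟩
end

section
/- The multiset extension of a well-founded order is well-founded: if ≺ is a well-founded order on W, then the order ≺_mul on finite multisets over W — defined by M ≺_mul N iff there exist multisets X, Y, Z with M = Z ∪ X, N = Z ∪ Y, Y nonempty, and every element of X is ≺ some element of Y — is well-founded. -/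
open Multiset

/-- The Dershowitz–Manna multiset extension of a relation `r` on `W`:
`M ≺_mul N` iff `M = Z + X`, `N = Z + Y` with `Y` nonempty and every element of
`X` is `r`-below some element of `Y`. -/
def MulOrd {W : Type*} (r : W → W → Prop) (M N : Multiset W) : Prop :=
  ∃ X Y Z : Multiset W, M = Z + X ∧ N = Z + Y ∧ Y ≠ 0 ∧
    ∀ x ∈ X, ∃ y ∈ Y, r x y

/-- One step: replace a single element `a` by a multiset of `r`-smaller elements. -/
def OneStep {W : Type*} (r : W → W → Prop) (M N : Multiset W) : Prop :=
  ∃ Z X a, M = Z + X ∧ N = a ::ₘ Z ∧ ∀ x ∈ X, r x a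

section
variable {W : Type*} (r : W → W → Prop)

lemma acc_add (a : W)
    (ha : ∀ b, r b a → ∀ M, Acc (OneStep r) M → Acc (OneStep r) (b ::ₘ M)) :
    ∀ (X M : Multiset W), Acc (OneStep r) M → (∀ x ∈ X, r x a) →
      Acc (OneStep r) (M + X) := by
  intro X
  induction X using Multiset.induction with
  | empty => intro M hM _; simpa using hM
  | cons b X ih =>
    intro M hM hX
    have h : M + (b ::ₘ X) = b ::ₘ (M + X) := by
      rw [Multiset.add_cons]
    rw [h]
    exact ha b (hX b (mem_cons_self _ _)) _
      (ih M hM fun x hx => hX x (mem_cons_of_mem hx))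

lemma acc_cons (hwf : WellFounded r) :
    ∀ a (M : Multiset W), Acc (OneStep r) M → Acc (OneStep r) (a ::ₘ M) := by
  intro a
  induction a using hwf.induction with
  | _ a iha =>
    intro M hM
    induction hM with
    | intro M hAcc ihM =>
      constructor
      intro N hN
      obtain ⟨Z, X, a', hNeq, hZa, hX⟩ := hN
      rw [Multiset.cons_eq_cons] at hZa
      rcases hZa with ⟨rfl, rfl⟩ | ⟨hne, cs, hM', hZ⟩
      · subst hNeq
        exact acc_add r a iha X M (Acc.intro M hAcc) hX
      · subst hNeq hM' hZ
        have h : (a ::ₘ cs) + X = a ::ₘ (cs + X) := by rw [Multiset.cons_add]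
        rw [h]
        exact ihM (cs + X) ⟨cs, X, a', rfl, rfl, hX⟩

lemma oneStep_wf (hwf : WellFounded r) : WellFounded (OneStep r) := by
  constructor
  intro M
  induction M using Multiset.induction with
  | empty =>
    constructor
    intro N hN
    obtain ⟨Z, X, a, _, h, _⟩ := hN
    exact absurd h.symm (Multiset.cons_ne_zero)
  | cons a M ih => exact acc_cons r hwf a M ih

lemma mulOrd_transGen :
    ∀ (Y Z X : Multiset W), Y ≠ 0 → (∀ x ∈ X, ∃ y ∈ Y, r x y) →
      Relation.TransGen (OneStep r) (Z + X) (Z + Y) := by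
  classical
  intro Y
  induction Y using Multiset.strongInductionOn with
  | _ Y ih =>
    intro Z X hY hX
    obtain ⟨a, ha⟩ := Multiset.exists_mem_of_ne_zero hY
    obtain ⟨Y', rfl⟩ := Multiset.exists_cons_of_mem ha
    by_cases hY' : Y' = 0
    · subst hY'
      refine Relation.TransGen.single ⟨Z, X, a, rfl, ?_, ?_⟩
      · rw [add_comm, Multiset.cons_add, zero_add]
      · intro x hx
        obtain ⟨y, hy, hr⟩ := hX x hx
        simp only [Multiset.mem_cons, Multiset.notMem_zero, or_false] at hy
        subst hy; exact hr
    · set X' := X.filter (fun x => ∃ y ∈ Y', r x y) with hX'def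
      set Xa := X.filter (fun x => ¬ ∃ y ∈ Y', r x y) with hXadef
      have hsplit : X' + Xa = X := Multiset.filter_add_not _ X
      have hXa : ∀ x ∈ Xa, r x a := by
        intro x hx
        have hmem := Multiset.of_mem_filter hx
        obtain ⟨y, hy, hr⟩ := hX x (Multiset.mem_of_mem_filter hx)
        rcases Multiset.mem_cons.mp hy with rfl | hy'
        · exact hr
        · exact absurd ⟨y, hy', hr⟩ hmem
      have step1 : OneStep r ((Z + Y') + Xa) (Z + (a ::ₘ Y')) := by
        refine ⟨Z + Y', Xa, a, rfl, ?_, hXa⟩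
        rw [Multiset.add_cons]
      have step2 : Relation.TransGen (OneStep r) (Z + X) ((Z + Y') + Xa) := by
        have h1 : Z + X = (Z + Xa) + X' := by
          rw [← hsplit]; simp [add_comm, add_left_comm, add_assoc]
        have h2 : (Z + Y') + Xa = (Z + Xa) + Y' := by simp [add_comm, add_left_comm, add_assoc]
        rw [h1, h2]
        refine ih Y' (Multiset.lt_cons_self Y' a) (Z + Xa) X' hY' ?_
        intro x hx
        exact (Multiset.mem_filter.mp hx).2
      exact step2.tail step1

end

/-- The multiset extension of a well-founded order is well-founded. -/
theorem mulOrd_wellFounded {W : Type*} (r : W → W → Prop) [IsTrans W r]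
    (hwf : WellFounded r) : WellFounded (MulOrd r) := by
  have h1 := (oneStep_wf r hwf).transGen
  have h2 : Subrelation (MulOrd r) (Relation.TransGen (OneStep r)) := by
    intro M N hMN
    obtain ⟨X, Y, Z, rfl, rfl, hY, hX⟩ := hMN
    exact mulOrd_transGen r Y Z X hY hX
  exact Subrelation.wf h2 h1
end

section
/- Every nonidentity 2-loop in the free 2-category generated by a string rewriting system decomposes as f = f₁ ⋆ f' ⋆ f₂ where f' is a 2-loop that is minimal with respect to vertical composition and f₁ ⋆ f₂ is again a 2-loop. -/
/-- One-step rewriting relation of a string rewriting system `R`. -/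
def Step {A : Type*} (R : List A → List A → Prop) (u v : List A) : Prop :=
  ∃ l r a b, R a b ∧ u = l ++ a ++ r ∧ v = l ++ b ++ r

/-- The rewriting graph of a string rewriting system: vertices are words,
arrows are rewriting steps.  Paths in this quiver are the `2`-cells of the free
`2`-category generated by the system (rewriting sequences). -/
def RewGraph {A : Type*} (R : List A → List A → Prop) := List A

instance {A : Type*} (R : List A → List A → Prop) : Quiver (RewGraph R) :=
  ⟨fun u v => PLift (Step R (u : List A) (v : List A))⟩

/-- A `2`-loop (a rewriting sequence with equal source and target) is minimal
with respect to vertical composition if in every factorization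
`f = g ⋆ h ⋆ k` with `h` a `2`-loop, `h` is an identity or equal to `f`. -/
def MinimalLoop {V : Type*} [Quiver V] {w : V} (f : Quiver.Path w w) : Prop :=
  ∀ (x : V) (g : Quiver.Path w x) (h : Quiver.Path x x) (k : Quiver.Path x w),
    f = g.comp (h.comp k) →
    h.length = 0 ∨ (⟨x, h⟩ : Σ' y : V, Quiver.Path y y) = ⟨w, f⟩

lemma loop_decomp_aux {V : Type*} [Quiver V] :
    ∀ (n : ℕ) (u : V) (f : Quiver.Path u u), f.length = n → f.length ≠ 0 →
      ∃ (v : V) (f₁ : Quiver.Path u v) (f' : Quiver.Path v v) (f₂ : Quiver.Path v u),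
        f = f₁.comp (f'.comp f₂) ∧
        (∀ (x : V) (g : Quiver.Path v x) (h : Quiver.Path x x) (k : Quiver.Path x v),
          f' = g.comp (h.comp k) →
          h.length = 0 ∨ (⟨x, h⟩ : Σ' y : V, Quiver.Path y y) = ⟨v, f'⟩) := by
  intro n
  induction n using Nat.strong_induction_on with
  | _ n ih =>
    intro u f hn hf
    by_cases hmin : ∀ (x : V) (g : Quiver.Path u x) (h : Quiver.Path x x) (k : Quiver.Path x u),
        f = g.comp (h.comp k) →
        h.length = 0 ∨ (⟨x, h⟩ : Σ' y : V, Quiver.Path y y) = ⟨u, f⟩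
    · exact ⟨u, Quiver.Path.nil, f, Quiver.Path.nil, by simp, hmin⟩
    · push_neg at hmin
      obtain ⟨x, g, h, k, hfac, hh0, hne⟩ := hmin
      have hlen : h.length < n := by
        have hle : g.length + (h.length + k.length) = n := by
          rw [← hn, hfac, Quiver.Path.length_comp, Quiver.Path.length_comp]
        rcases Nat.lt_or_ge h.length n with hlt | hge
        · exact hlt
        · exfalso
          have hg : g.length = 0 := by omega
          have hk : k.length = 0 := by omega
          cases g with
          | nil =>
            cases k with
            | nil =>
              apply hne
              simp only [Quiver.Path.nil_comp] at hfac
              exact congrArg (fun p => (⟨u, p⟩ : Σ' y : V, Quiver.Path y y)) hfac.symm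
            | cons _ _ => simp [Quiver.Path.length] at hk
          | cons _ _ => simp [Quiver.Path.length] at hg
      obtain ⟨v, h₁, h', h₂, hfac', hmin'⟩ := ih h.length hlen x h rfl hh0
      refine ⟨v, g.comp h₁, h', h₂.comp k, ?_, hmin'⟩
      rw [hfac, hfac']
      simp [Quiver.Path.comp_assoc]


/-- Every nonidentity `2`-loop `f` in the free `2`-category generated by a string
rewriting system decomposes as `f = f₁ ⋆ f' ⋆ f₂` where `f'` is a `2`-loop
minimal with respect to vertical composition and `f₁ ⋆ f₂` is again a `2`-loop
(automatic here, since `f₁ : u ⇒ v` and `f₂ : v ⇒ u`). -/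
theorem loop_decomposition {A : Type*} (R : List A → List A → Prop)
    (u : RewGraph R) (f : Quiver.Path u u) (hf : f.length ≠ 0) :
    ∃ (v : RewGraph R) (f₁ : Quiver.Path u v) (f' : Quiver.Path v v)
      (f₂ : Quiver.Path v u),
      f = f₁.comp (f'.comp f₂) ∧ MinimalLoop f' :=
  loop_decomp_aux f.length u f rfl hf
end

section
/- In a terminating confluent string rewriting system, labelling each rewriting step by its target word, ordered by the transitive closure of the rewriting relation, is a well-founded labelling that makes every local branching strictly decreasing. -/
/-- Termination: no infinite rewriting sequence. -/
def Terminating {A : Type*} (R : List A → List A → Prop) : Prop :=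
  ¬ ∃ f : ℕ → List A, ∀ n, Step R (f n) (f (n + 1))

/-- Confluence. -/
def Confluent {A : Type*} (R : List A → List A → Prop) : Prop :=
  ∀ u v w, Relation.ReflTransGen (Step R) u v → Relation.ReflTransGen (Step R) u w →
    ∃ x, Relation.ReflTransGen (Step R) v x ∧ Relation.ReflTransGen (Step R) w x

/-!
Every word of a rewriting sequence from `v`, other than `v` itself, is reached from `v` by `→⁺`
and so lies strictly below `v`. Hence labelling steps by their targets makes *any* completion of
a local branching strictly decreasing, and confluence provides one. The order is well-founded
because `→⁺` inherits termination from `→`.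
-/

theorem List.IsChain.transGen_of_mem {α : Type*} {r : α → α → Prop} {a z : α} {l : List α}
    (h : IsChain r (a :: l)) (hz : z ∈ l) : Relation.TransGen r a z := by
  obtain _ | ⟨b, l⟩ := l
  · simp at hz
  · rw [isChain_cons_cons] at h
    exact h.2.induction (Relation.TransGen r a) _ (fun _ _ hxy hx => hx.tail hxy)
      (fun _ => .single h.1) z hz

theorem Terminating.wellFounded_transGen {A : Type*} {R : List A → List A → Prop}
    (h : Terminating R) : WellFounded (fun z v : List A => Relation.TransGen (Step R) v z) := by
  have hstep : WellFounded (Function.swap (Step R)) :=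
    wellFounded_iff_isEmpty_descending_chain.mpr ⟨fun ⟨f, hf⟩ => h ⟨f, hf⟩⟩
  exact hstep.transGen.mono fun _ _ => Relation.transGen_swap.mpr

/-- In a terminating confluent string rewriting system, labelling each step by
its target word, ordered by the transitive closure of the rewriting relation
(`z` below `v` iff `v →⁺ z`), is a well-founded labelling making every local
branching strictly decreasing: the order is well-founded, and every local
branching `(f, g)` from `u` is completed by sequences `f'`, `g'` to a common
word all of whose intermediate targets are strictly below `t(f)`,
resp. `t(g)`. -/
theorem target_labelling_strictly_decreasing {A : Type*} (R : List A → List A → Prop)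
    (hterm : Terminating R) (hc : Confluent R) :
    WellFounded (fun z v : List A => Relation.TransGen (Step R) v z) ∧
    (∀ u v w, Step R u v → Step R u w →
      ∃ lf lg : List (List A),
        List.Chain (Step R) v lf ∧ List.Chain (Step R) w lg ∧
        (v :: lf).getLast (by simp) = (w :: lg).getLast (by simp) ∧
        (∀ z ∈ lf, Relation.TransGen (Step R) v z) ∧
        (∀ z ∈ lg, Relation.TransGen (Step R) w z)) := by
  refine ⟨hterm.wellFounded_transGen, fun u v w hv hw => ?_⟩
  obtain ⟨x, hvx, hwx⟩ := hc u v w (.single hv) (.single hw)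
  obtain ⟨lf, hcf, hlf⟩ := List.exists_isChain_cons_of_relationReflTransGen hvx
  obtain ⟨lg, hcg, hlg⟩ := List.exists_isChain_cons_of_relationReflTransGen hwx
  exact ⟨lf, lg, hcf, hcg, hlf.trans hlg.symm, fun _ => hcf.transGen_of_mem,
    fun _ => hcg.transGen_of_mem⟩
end

section
/- In the string rewriting system on the alphabet {s,t} with the two rules sts ⇒ tst and tst ⇒ sts (presenting the braid monoid B₃⁺), every word is congruent to a word of the form (sts)^N v where N is maximal, and this word is uniquely determined; i.e., if (sts)^N v and (sts)^N w (with v, w containing no factor sts or tst among the relevant positions, and N maximal for each) are congruent, then v = w. -/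
/-!
Reading a word letter by letter and absorbing each completed factor `sts` or `tst` into a power of
`Δ = sts`, which is quasi-central (`x Δ ≡ Δ σ(x)` with `σ` exchanging `s` and `t`),
computes the normal form `aᴺ v` of the convergent presentation with `a = Δ`. Reading `sts` and
reading `tst` from any state reached this way give the same state, so the result is an invariant
of the congruence class; on `Δᴺ v` with `v` free of `sts` and `tst` it returns `(N, v)`.
Maximality of `N` forces `v` to be free of these factors, whence uniqueness. Existence holds
because `Δᴺ` is no longer than the word.
-/

/-- The two generators `s`, `t` of the braid monoid `B₃⁺`. -/
inductive B3Gen : Type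
  | s : B3Gen
  | t : B3Gen

open B3Gen

/-- The rules `sts ⇒ tst` and `tst ⇒ sts`. -/
inductive B3Rule : List B3Gen → List B3Gen → Prop
  | alpha : B3Rule [s, t, s] [t, s, t]
  | beta : B3Rule [t, s, t] [s, t, s]

/-- The word `(sts)^n`. -/
def stsPow (n : ℕ) : List B3Gen := (List.replicate n [s, t, s]).flatten

open Relation

theorem Relation.EqvGen.lift {α β : Type*} {r : α → α → Prop} {p : β → β → Prop}
    {a b : α} (f : α → β) (hf : ∀ a b, r a b → p (f a) (f b)) (h : EqvGen r a b) :
    EqvGen p (f a) (f b) := by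
  induction h with
  | rel a b hab => exact .rel _ _ (hf a b hab)
  | refl a => exact .refl _
  | symm a b _ ih => exact ih.symm
  | trans a b c _ _ ihab ihbc => exact ihab.trans _ _ _ ihbc

theorem Relation.EqvGen.apply_eq {α β : Type*} {r : α → α → Prop} {a b : α} {f : α → β}
    (hf : ∀ a b, r a b → f a = f b) (h : EqvGen r a b) : f a = f b :=
  (Equivalence.eqvGen_iff eq_equivalence).1 (h.lift f hf)

namespace Step

variable {A : Type*} {R : List A → List A → Prop} {u v : List A}

theorem of_rel {a b : List A} (h : R a b) (l r : List A) : Step R (l ++ a ++ r) (l ++ b ++ r) :=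
  ⟨l, r, a, b, h, rfl, rfl⟩

theorem append_append (h : Step R u v) (x y : List A) : Step R (x ++ u ++ y) (x ++ v ++ y) := by
  obtain ⟨l, r, a, b, hab, rfl, rfl⟩ := h
  exact ⟨x ++ l, r ++ y, a, b, hab, by simp, by simp⟩

theorem eqvGen_append_append (h : EqvGen (Step R) u v) (x y : List A) :
    EqvGen (Step R) (x ++ u ++ y) (x ++ v ++ y) :=
  h.lift (fun w => x ++ w ++ y) fun _ _ huv => huv.append_append x y

end Step

namespace B3Gen

def swap : B3Gen → B3Gen
  | s => t
  | t => s

@[simp] theorem swap_s : s.swap = t := rfl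

@[simp] theorem swap_t : t.swap = s := rfl

theorem swap_involutive : Function.Involutive swap := by
  intro x; cases x <;> rfl

end B3Gen

open B3Gen

theorem length_stsPow (n : ℕ) : (stsPow n).length = 3 * n := by
  simp [stsPow, List.length_flatten, List.sum_replicate, mul_comm]

theorem stsPow_succ (n : ℕ) : stsPow (n + 1) = [s, t, s] ++ stsPow n := by
  simp [stsPow, List.replicate_succ]

theorem stsPow_succ' (n : ℕ) : stsPow (n + 1) = stsPow n ++ [s, t, s] := by
  simp [stsPow, List.replicate_succ']

theorem B3Rule.length_eq {a b : List B3Gen} (h : B3Rule a b) : a.length = b.length := by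
  cases h <;> rfl

theorem length_eq_of_eqvGen {u v : List B3Gen} (h : EqvGen (Step B3Rule) u v) :
    u.length = v.length :=
  h.apply_eq fun _ _ ⟨_, _, _, _, hab, hu, hv⟩ => by simp [hu, hv, hab.length_eq]

theorem exists_maximal_stsPow (u : List B3Gen) : ∃ (N : ℕ) (v : List B3Gen),
    EqvGen (Step B3Rule) u (stsPow N ++ v) ∧
    ¬ ∃ v', EqvGen (Step B3Rule) u (stsPow (N + 1) ++ v') := by
  by_contra! h
  have hall : ∀ N, ∃ v, EqvGen (Step B3Rule) u (stsPow N ++ v) := fun N =>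
    N.rec ⟨u, .refl _⟩ fun N ⟨v, hv⟩ => h N v hv
  obtain ⟨v, hv⟩ := hall (u.length + 1)
  have := length_eq_of_eqvGen hv
  simp only [List.length_append, length_stsPow] at this
  omega

theorem eqvGen_append_sts (x : List B3Gen) :
    EqvGen (Step B3Rule) (x ++ [s, t, s]) ([s, t, s] ++ x.map swap) := by
  induction x with
  | nil => exact .refl _
  | cons c x ih =>
    have hc : EqvGen (Step B3Rule) ([c] ++ [s, t, s]) ([s, t, s] ++ [c.swap]) := by
      cases c
      · exact .symm _ _ (.rel _ _ (Step.of_rel B3Rule.beta [s] []))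
      · exact .rel _ _ (Step.of_rel B3Rule.beta [] [s])
    have hx : EqvGen (Step B3Rule) (c :: x ++ [s, t, s]) ([c] ++ [s, t, s] ++ x.map swap) := by
      simpa using Step.eqvGen_append_append ih [c] []
    exact hx.trans _ _ _ (by simpa using Step.eqvGen_append_append hc [] (x.map swap))

def DeltaFree (v : List B3Gen) : Prop := ¬ [s, t, s] <:+: v ∧ ¬ [t, s, t] <:+: v

theorem DeltaFree.nil : DeltaFree [] := ⟨by simp, by simp⟩

theorem DeltaFree.of_maximal {N : ℕ} {v : List B3Gen}
    (h : ¬ ∃ v', EqvGen (Step B3Rule) (stsPow N ++ v) (stsPow (N + 1) ++ v')) : DeltaFree v := by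
  have hsts : ∀ p q, ¬ EqvGen (Step B3Rule) v (p ++ [s, t, s] ++ q) := by
    intro p q hv
    have hp : EqvGen (Step B3Rule) (p ++ [s, t, s] ++ q) ([s, t, s] ++ (p.map swap ++ q)) := by
      simpa using Step.eqvGen_append_append (eqvGen_append_sts p) [] q
    have hN := Step.eqvGen_append_append (hv.trans _ _ _ hp) (stsPow N) []
    exact h ⟨p.map swap ++ q, by simpa [stsPow_succ'] using hN⟩
  refine ⟨fun ⟨p, q, hv⟩ => hsts p q (hv ▸ .refl _), fun ⟨p, q, hv⟩ => hsts p q ?_⟩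
  exact hv ▸ .rel _ _ (Step.of_rel B3Rule.beta p q)

theorem deltaFree_reverse {v : List B3Gen} : DeltaFree v.reverse ↔ DeltaFree v := by
  unfold DeltaFree
  rw [← List.reverse_infix (l₂ := v), ← List.reverse_infix (l₁ := [t, s, t]) (l₂ := v)]
  rfl

theorem DeltaFree.of_cons {x : B3Gen} {v : List B3Gen} (h : DeltaFree (x :: v)) : DeltaFree v :=
  ⟨fun h' => h.1 (h'.trans (List.suffix_cons x v).isInfix),
    fun h' => h.2 (h'.trans (List.suffix_cons x v).isInfix)⟩

theorem DeltaFree.map_swap {v : List B3Gen} (h : DeltaFree v) : DeltaFree (v.map swap) := by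
  refine ⟨fun h' => h.2 ?_, fun h' => h.1 ?_⟩ <;>
    simpa [List.map_map, swap_involutive.comp_self] using h'.map swap

/-- The state `(N, r)` stands for the word `(sts)^N r.reverse`: `r` is stored reversed so that its
last letters are at the head. A letter completing a factor `p·sts` or `p·tst` is absorbed into the
power through `p·sts ≡ sts·σ(p)`. -/
def pushLetter : ℕ × List B3Gen → B3Gen → ℕ × List B3Gen
  | (n, t :: s :: r), s => (n + 1, r.map swap)
  | (n, s :: t :: r), t => (n + 1, r.map swap)
  | (n, r), x => (n, x :: r)

theorem deltaFree_pushLetter {q : ℕ × List B3Gen} (h : DeltaFree q.2) (x : B3Gen) :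
    DeltaFree (pushLetter q x).2 := by
  obtain ⟨n, _ | ⟨_ | _, _ | ⟨_ | _, r⟩⟩⟩ := q <;> cases x <;>
    first
    | exact h.of_cons.of_cons.map_swap
    | simp_all [pushLetter.eq_def, DeltaFree, List.infix_cons_iff]

theorem pushLetter_of_deltaFree_cons {n : ℕ} {x : B3Gen} {r : List B3Gen}
    (h : DeltaFree (x :: r)) :
    pushLetter (n, r) x = (n, x :: r) := by
  obtain _ | ⟨_ | _, _ | ⟨_ | _, r⟩⟩ := r <;> cases x <;>
    simp_all [pushLetter.eq_def, DeltaFree, List.infix_cons_iff]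

-- A check on the last four letters of the state; `DeltaFree` excludes the endings `…sts`, `…tst`
-- on which the two readings would differ.
theorem foldl_pushLetter_sts {q : ℕ × List B3Gen} (h : DeltaFree q.2) :
    [s, t, s].foldl pushLetter q = [t, s, t].foldl pushLetter q := by
  obtain ⟨n, _ | ⟨_ | _, _ | ⟨_ | _, _ | ⟨_ | _, _ | ⟨_ | _, r⟩⟩⟩⟩⟩ := q <;>
    simp_all [pushLetter.eq_def, DeltaFree, List.infix_cons_iff]

theorem deltaFree_foldl_pushLetter {q : ℕ × List B3Gen} (h : DeltaFree q.2) (u : List B3Gen) :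
    DeltaFree (u.foldl pushLetter q).2 := by
  induction u generalizing q with
  | nil => exact h
  | cons x u ih => exact ih (deltaFree_pushLetter h x)

def quasiNormalForm (u : List B3Gen) : ℕ × List B3Gen := u.foldl pushLetter (0, [])

theorem quasiNormalForm_eq_of_step {u v : List B3Gen} (h : Step B3Rule u v) :
    quasiNormalForm u = quasiNormalForm v := by
  obtain ⟨l, r, a, b, hab, rfl, rfl⟩ := h
  have hl := deltaFree_foldl_pushLetter (q := (0, [])) DeltaFree.nil l
  cases hab <;> simp only [quasiNormalForm, List.foldl_append, foldl_pushLetter_sts hl]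

theorem quasiNormalForm_eq_of_eqvGen {u v : List B3Gen} (h : EqvGen (Step B3Rule) u v) :
    quasiNormalForm u = quasiNormalForm v :=
  h.apply_eq fun _ _ => quasiNormalForm_eq_of_step

theorem foldl_pushLetter_stsPow (n N : ℕ) :
    (stsPow N).foldl pushLetter (n, []) = (n + N, []) := by
  induction N generalizing n with
  | zero => rfl
  | succ N ih =>
    rw [stsPow_succ, List.foldl_append]
    exact (ih (n + 1)).trans (by congr 1; omega)

theorem foldl_pushLetter_of_deltaFree {v : List B3Gen} (hv : DeltaFree v) (n : ℕ) :
    v.foldl pushLetter (n, []) = (n, v.reverse) := by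
  induction v using List.reverseRecOn with
  | nil => rfl
  | append_singleton v x ih =>
    have hx : DeltaFree (x :: v.reverse) := by simpa using deltaFree_reverse.2 hv
    rw [List.foldl_append, ih (deltaFree_reverse.1 hx.of_cons), List.foldl_cons, List.foldl_nil,
      pushLetter_of_deltaFree_cons hx, List.reverse_append, List.reverse_singleton,
      List.singleton_append]

theorem quasiNormalForm_stsPow_append {N : ℕ} {v : List B3Gen} (hv : DeltaFree v) :
    quasiNormalForm (stsPow N ++ v) = (N, v.reverse) := by
  rw [quasiNormalForm, List.foldl_append, foldl_pushLetter_stsPow, zero_add,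
    foldl_pushLetter_of_deltaFree hv]

/-- In the presentation `⟨ s, t | sts ⇒ tst, tst ⇒ sts ⟩` of `B₃⁺`, every word
is congruent to a word `(sts)^N v` with `N` maximal, and such a word is unique:
if `(sts)^N v` and `(sts)^N w`, each with `N` maximal, are congruent, then
`v = w`. -/
theorem b3_qnf_exists_unique :
    (∀ u : List B3Gen, ∃ (N : ℕ) (v : List B3Gen),
      Relation.EqvGen (Step B3Rule) u (stsPow N ++ v) ∧
      ¬ ∃ v' : List B3Gen, Relation.EqvGen (Step B3Rule) u (stsPow (N + 1) ++ v')) ∧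
    (∀ (N : ℕ) (v w : List B3Gen),
      Relation.EqvGen (Step B3Rule) (stsPow N ++ v) (stsPow N ++ w) →
      (¬ ∃ v', Relation.EqvGen (Step B3Rule) (stsPow N ++ v) (stsPow (N + 1) ++ v')) →
      (¬ ∃ w', Relation.EqvGen (Step B3Rule) (stsPow N ++ w) (stsPow (N + 1) ++ w')) →
      v = w) := by
  refine ⟨exists_maximal_stsPow, fun N v w h hv hw => ?_⟩
  have hqnf := quasiNormalForm_eq_of_eqvGen h
  rw [quasiNormalForm_stsPow_append (.of_maximal hv),
    quasiNormalForm_stsPow_append (.of_maximal hw)] at hqnf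
  simpa using hqnf
end
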